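/- arXiv:2306.02971 — 2 statements merged into one kernel-verified Lean document; each statement's English description precedes it below -/
import Mathlib

section
/- Let G be the star graph on N vertices with hub N (edges (N,i) for i ∈ [N−1], plus self-loops), and let T be a positive real with T < (N−1)³. Define R*_I = min over J ⊆ I of max( δ^I(J)^(1/2)·T^(1/2), δ^V(I∖J)^(1/3)·T^(2/3) ), and R* = max over I ⊆ V of R*_I, where δ^A(B) is the dominating number of B from A (∞ if no dominating set exists, and 0 if B is empty). Then R* = T^(2/3). -/
open Finset

/-- For the star graph on `N` vertices with hub (index `N-1`),
and `0 < T < (N-1)³`, the problem complexity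
`R* = max_{I ⊆ V} min_{J ⊆ I} max(δ^I(J)^(1/2)·T^(1/2), δ^V(I∖J)^(1/3)·T^(2/3))`
equals `T^(2/3)`. Here `δ^A(B)` is the dominating number of `B` from `A`
(its minimum is `0` when `B = ∅`; a dominating set always exists thanks to
self-loops). -/
theorem star_graph_problem_complexity
    (N : ℕ) (hN : 2 ≤ N)
    (E : Fin N → Fin N → Prop) [DecidableRel E]
    (hE : ∀ i j, E i j ↔ (i = j ∨ (i.val = N - 1 ∧ j.val ≠ N - 1)))
    (T : ℝ) (hT : 0 < T) (hT2 : T < ((N : ℝ) - 1) ^ 3)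
    (delta : Finset (Fin N) → Finset (Fin N) → ℕ)
    (hdelta : ∀ A B, delta A B =
      sInf {n | ∃ D : Finset (Fin N), D ⊆ A ∧ (∀ b ∈ B, ∃ d ∈ D, E d b) ∧ D.card = n})
    (Rstar : ℝ)
    (hR : Rstar = (Finset.univ : Finset (Finset (Fin N))).sup' Finset.univ_nonempty
      (fun I => I.powerset.inf' (Finset.powerset_nonempty I)
        (fun J => max ((delta I J : ℝ) ^ ((1 : ℝ) / 2) * T ^ ((1 : ℝ) / 2))
          ((delta Finset.univ (I \ J) : ℝ) ^ ((1 : ℝ) / 3) * T ^ ((2 : ℝ) / 3))))) :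
    Rstar = T ^ ((2 : ℝ) / 3) := by
  have hN1 : N - 1 < N := by omega
  set hub : Fin N := ⟨N - 1, hN1⟩ with hhub
  have Ehub : ∀ b : Fin N, E hub b := by
    intro b
    rw [hE]
    by_cases h : b.val = N - 1
    · exact Or.inl (Fin.ext h.symm)
    · exact Or.inr ⟨rfl, h⟩
  have Eself : ∀ b : Fin N, E b b := fun b => (hE b b).mpr (Or.inl rfl)
  -- delta of empty target is 0
  have hdom0 : ∀ A, delta A ∅ = 0 := by
    intro A
    rw [hdelta]
    refine Nat.sInf_eq_zero.mpr (Or.inl ?_)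
    exact ⟨∅, empty_subset _, by simp, card_empty⟩
  -- delta from univ is at most 1
  have hV1 : ∀ B : Finset (Fin N), delta univ B ≤ 1 := by
    intro B
    rw [hdelta]
    exact Nat.sInf_le ⟨{hub}, subset_univ _,
      fun b _ => ⟨hub, mem_singleton_self _, Ehub b⟩, card_singleton _⟩
  -- delta from univ is at least 1 for nonempty target
  have hVge1 : ∀ B : Finset (Fin N), B.Nonempty → 1 ≤ delta univ B := by
    intro B hB
    rw [Nat.one_le_iff_ne_zero, hdelta]
    intro h0
    rcases Nat.sInf_eq_zero.mp h0 with hmem | hempty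
    · obtain ⟨D, _, hDdom, hcard⟩ := hmem
      obtain ⟨b, hb⟩ := hB
      obtain ⟨d, hd, _⟩ := hDdom b hb
      rw [card_eq_zero] at hcard
      subst hcard
      simp at hd
    · have : (1 : ℕ) ∈ {n | ∃ D : Finset (Fin N), D ⊆ univ ∧
          (∀ b ∈ B, ∃ d ∈ D, E d b) ∧ D.card = n} :=
        ⟨{hub}, subset_univ _, fun b _ => ⟨hub, mem_singleton_self _, Ehub b⟩, card_singleton _⟩
      rw [hempty] at this
      exact this
  -- leaves
  set L : Finset (Fin N) := univ \ {hub} with hL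
  have hLcard : L.card = N - 1 := by
    rw [hL, card_sdiff_of_subset (by simp), card_univ, Fintype.card_fin, card_singleton]
  have hdeltaL : ∀ J ⊆ L, delta L J = J.card := by
    intro J hJ
    rw [hdelta]
    apply le_antisymm
    · exact Nat.sInf_le ⟨J, hJ, fun b hb => ⟨b, hb, Eself b⟩, rfl⟩
    · refine le_csInf ⟨J.card, J, hJ, fun b hb => ⟨b, hb, Eself b⟩, rfl⟩ ?_
      rintro n ⟨D, hD, hDdom, rfl⟩
      refine card_le_card ?_
      intro b hb
      obtain ⟨d, hd, hEdb⟩ := hDdom b hb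
      rcases (hE d b).mp hEdb with rfl | ⟨hd1, _⟩
      · exact hd
      · exfalso
        have : d ∈ univ \ {hub} := hD hd
        simp only [mem_sdiff, mem_singleton] at this
        exact this.2 (Fin.ext hd1)
  have hc1 : (1 : ℝ) ≤ (N : ℝ) - 1 := by
    have : (2 : ℝ) ≤ (N : ℝ) := by exact_mod_cast hN
    linarith
  have hT23pos : (0 : ℝ) < T ^ ((2 : ℝ) / 3) := Real.rpow_pos_of_pos hT _
  rw [hR]
  apply le_antisymm
  · apply Finset.sup'_le
    intro I _
    refine le_trans (Finset.inf'_le _ (mem_powerset.mpr (empty_subset I))) ?_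
    refine max_le ?_ ?_
    · rw [hdom0]
      rw [Nat.cast_zero, Real.zero_rpow (by norm_num), zero_mul]
      exact le_of_lt hT23pos
    · rw [sdiff_empty]
      have h1 : ((delta univ I : ℝ)) ^ ((1 : ℝ) / 3) ≤ 1 := by
        calc ((delta univ I : ℝ)) ^ ((1 : ℝ) / 3)
            ≤ (1 : ℝ) ^ ((1 : ℝ) / 3) := by
              apply Real.rpow_le_rpow (by positivity) ?_ (by norm_num)
              exact_mod_cast hV1 I
          _ = 1 := Real.one_rpow _
      calc ((delta univ I : ℝ)) ^ ((1 : ℝ) / 3) * T ^ ((2 : ℝ) / 3)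
          ≤ 1 * T ^ ((2 : ℝ) / 3) := by
            exact mul_le_mul_of_nonneg_right h1 (le_of_lt hT23pos)
        _ = T ^ ((2 : ℝ) / 3) := one_mul _
  · refine le_trans ?_ (Finset.le_sup' _ (mem_univ L))
    apply Finset.le_inf'
    intro J hJ
    rw [mem_powerset] at hJ
    by_cases hJL : J = L
    · subst hJL
      refine le_max_of_le_left ?_
      rw [hdeltaL _ (le_refl _), hLcard]
      have hcast : ((N - 1 : ℕ) : ℝ) = (N : ℝ) - 1 := by
        rw [Nat.cast_sub (by omega)]; simp
      rw [hcast]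
      have key : T ^ ((1 : ℝ) / 6) ≤ ((N : ℝ) - 1) ^ ((1 : ℝ) / 2) := by
        calc T ^ ((1 : ℝ) / 6) ≤ (((N : ℝ) - 1) ^ 3) ^ ((1 : ℝ) / 6) :=
              Real.rpow_le_rpow (le_of_lt hT) (le_of_lt hT2) (by norm_num)
          _ = ((N : ℝ) - 1) ^ ((1 : ℝ) / 2) := by
              rw [← Real.rpow_natCast ((N : ℝ) - 1) 3,
                ← Real.rpow_mul (by linarith)]
              norm_num
      calc T ^ ((2 : ℝ) / 3) = T ^ ((1 : ℝ) / 6 + (1 : ℝ) / 2) := by norm_num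
        _ = T ^ ((1 : ℝ) / 6) * T ^ ((1 : ℝ) / 2) := Real.rpow_add hT _ _
        _ ≤ ((N : ℝ) - 1) ^ ((1 : ℝ) / 2) * T ^ ((1 : ℝ) / 2) :=
            mul_le_mul_of_nonneg_right key (Real.rpow_nonneg (le_of_lt hT) _)
    · refine le_max_of_le_right ?_
      have hne : (L \ J).Nonempty := by
        rw [sdiff_nonempty]
        intro hLJ
        exact hJL (le_antisymm hJ hLJ)
      have : delta univ (L \ J) = 1 := le_antisymm (hV1 _) (hVge1 _ hne)
      rw [this]
      rw [Nat.cast_one, Real.one_rpow, one_mul]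
end

section
/- Let P and Q be probability measures on the same measurable space and let F be any event. Then P(F) + Q(Fᶜ) ≥ (1/2)·exp(−KL(P, Q)), where KL denotes the Kullback–Leibler divergence and Fᶜ is the complement of F. -/
open MeasureTheory Classical
open scoped ENNReal

/-- Kullback–Leibler divergence: `∫ log(dP/dQ) dP` when `P ≪ Q` and the
log-likelihood ratio is integrable, and `∞` otherwise. -/

noncomputable def klDiv' {Ω : Type*} [MeasurableSpace Ω] (P Q : Measure Ω) : ℝ≥0∞ :=
  if P ≪ Q ∧ Integrable (llr P Q) P
  then ENNReal.ofReal (∫ x, llr P Q x ∂P) else ⊤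

/-- `exp(−x)` for `x : ℝ≥0∞`, with `exp(−∞) = 0`. -/
noncomputable def expNeg (x : ℝ≥0∞) : ℝ≥0∞ :=
  if x = ⊤ then 0 else ENNReal.ofReal (Real.exp (-x.toReal))

/-- Bretagnolle–Huber: for probability measures `P, Q` and any
event `F`, `P(F) + Q(Fᶜ) ≥ (1/2)·exp(−KL(P,Q))`. -/
theorem bretagnolle_huber
    {Ω : Type*} [MeasurableSpace Ω] (P Q : Measure Ω)
    [IsProbabilityMeasure P] [IsProbabilityMeasure Q]
    (F : Set Ω) (hF : MeasurableSet F) :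
    (1 / 2 : ℝ≥0∞) * expNeg (klDiv' P Q) ≤ P F + Q Fᶜ := by
  by_cases h : P ≪ Q ∧ Integrable (llr P Q) P
  swap
  · simp [klDiv', h, expNeg]
  obtain ⟨hPQ, hint⟩ := h
  set I : ℝ := ∫ x, llr P Q x ∂P with hI
  have hkl : klDiv' P Q = ENNReal.ofReal I := if_pos ⟨hPQ, hint⟩
  set g : Ω → ℝ≥0∞ := Q.rnDeriv P with hg
  have hg_meas : Measurable g := Measure.measurable_rnDeriv Q P
  have hg_lt_top : ∀ᵐ x ∂P, g x < ∞ := Measure.rnDeriv_lt_top Q P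
  -- a.e. identities
  have h_exp : (fun x ↦ Real.exp (- llr P Q x)) =ᵐ[P] fun x ↦ (g x).toReal :=
    exp_neg_llr hPQ
  have h_exp2 : (fun x ↦ Real.exp (- llr P Q x / 2)) =ᵐ[P]
      fun x ↦ Real.sqrt (g x).toReal := by
    filter_upwards [h_exp] with x hx
    simp only [Real.exp_half, hx]
  -- integrability of the square root of the likelihood ratio
  have h_int_g : Integrable (fun x ↦ (g x).toReal) P :=
    Measure.integrable_toReal_rnDeriv
  have h_meas_sqrt : AEStronglyMeasurable (fun x ↦ Real.sqrt (g x).toReal) P :=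
    (Real.continuous_sqrt.measurable.comp hg_meas.ennreal_toReal).aestronglyMeasurable
  have h_int_sqrt : Integrable (fun x ↦ Real.sqrt (g x).toReal) P := by
    refine Integrable.mono' ((h_int_g.add (integrable_const 1)).div_const 2)
      h_meas_sqrt (ae_of_all _ fun x ↦ ?_)
    have h0 : (0:ℝ) ≤ (g x).toReal := ENNReal.toReal_nonneg
    rw [Real.norm_eq_abs, abs_of_nonneg (Real.sqrt_nonneg _)]
    simp only [Pi.add_apply, Pi.div_apply]
    nlinarith [Real.sq_sqrt h0, sq_nonneg (Real.sqrt (g x).toReal - 1)]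
  -- Jensen's inequality for `exp`
  have h_jensen : Real.exp (∫ x, (- llr P Q x / 2) ∂P)
      ≤ ∫ x, Real.exp (- llr P Q x / 2) ∂P := by
    refine convexOn_exp.map_integral_le Real.continuous_exp.continuousOn isClosed_univ
      (ae_of_all _ fun x ↦ Set.mem_univ _) (hint.neg.div_const 2) ?_
    exact (h_int_sqrt.congr h_exp2.symm)
  have h_int_eq : ∫ x, Real.exp (- llr P Q x / 2) ∂P
      = ∫ x, Real.sqrt (g x).toReal ∂P := integral_congr_ae h_exp2
  have h_avg : ∫ x, (- llr P Q x / 2) ∂P = -I / 2 := by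
    rw [integral_div, integral_neg]
  -- the lintegral of √g
  set S : ℝ≥0∞ := ∫⁻ x, (g x) ^ (1/2 : ℝ) ∂P with hSdef
  have h_real_lint : ∫ x, Real.sqrt (g x).toReal ∂P = S.toReal := by
    rw [integral_eq_lintegral_of_nonneg_ae (ae_of_all _ fun x ↦ Real.sqrt_nonneg _)
      h_meas_sqrt]
    congr 1
    refine lintegral_congr_ae ?_
    filter_upwards [hg_lt_top] with x hx
    rw [Real.sqrt_eq_rpow, ENNReal.toReal_rpow, ENNReal.ofReal_toReal]
    exact (ENNReal.rpow_lt_top_of_nonneg (by norm_num) hx.ne).ne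
  -- bounds on min and max lintegrals
  set A : ℝ≥0∞ := ∫⁻ x, min (g x) 1 ∂P with hAdef
  set B : ℝ≥0∞ := ∫⁻ x, max (g x) 1 ∂P with hBdef
  have hA_le : A ≤ P F + Q Fᶜ := by
    rw [hAdef, ← lintegral_add_compl _ hF]
    have h1 : ∫⁻ x in F, min (g x) 1 ∂P ≤ P F := by
      calc ∫⁻ x in F, min (g x) 1 ∂P ≤ ∫⁻ _ in F, 1 ∂P :=
            lintegral_mono fun x ↦ min_le_right _ _
        _ = P F := setLIntegral_one F
    have h2 : ∫⁻ x in Fᶜ, min (g x) 1 ∂P ≤ Q Fᶜ :=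
      (lintegral_mono fun x ↦ min_le_left _ _).trans (Measure.setLIntegral_rnDeriv_le _)
    exact add_le_add h1 h2
  have hB_le : B ≤ 2 := by
    calc B ≤ ∫⁻ x, g x + 1 ∂P :=
          lintegral_mono fun x ↦ max_le (le_add_right le_rfl) (le_add_left le_rfl)
      _ = (∫⁻ x, g x ∂P) + 1 := by
          rw [lintegral_add_right _ measurable_const, lintegral_one, measure_univ]
      _ ≤ 1 + 1 := by
          gcongr
          exact Measure.lintegral_rnDeriv_le.trans (by simp)
      _ = 2 := one_add_one_eq_two
  -- Cauchy–Schwarz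
  have hCS : S ≤ A ^ (1/2 : ℝ) * B ^ (1/2 : ℝ) := by
    have hH := ENNReal.lintegral_mul_norm_pow_le (μ := P)
      (f := fun x ↦ min (g x) 1) (g := fun x ↦ max (g x) 1)
      (hg_meas.min measurable_const).aemeasurable
      (hg_meas.max measurable_const).aemeasurable
      (p := 1/2) (q := 1/2) (by norm_num) (by norm_num) (by norm_num)
    refine le_trans (le_of_eq (lintegral_congr fun x ↦ ?_)) hH
    rw [← ENNReal.mul_rpow_of_nonneg _ _ (by norm_num : (0:ℝ) ≤ 1/2), min_mul_max, mul_one]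
  have hS2 : S ^ 2 ≤ (P F + Q Fᶜ) * 2 := by
    calc S ^ 2 ≤ (A ^ (1/2 : ℝ) * B ^ (1/2 : ℝ)) ^ 2 := by gcongr
      _ = A * B := by
          rw [mul_pow, ← ENNReal.rpow_natCast (A ^ (1/2:ℝ)) 2,
            ← ENNReal.rpow_natCast (B ^ (1/2:ℝ)) 2, ← ENNReal.rpow_mul, ← ENNReal.rpow_mul]
          norm_num
      _ ≤ (P F + Q Fᶜ) * 2 := mul_le_mul' hA_le hB_le
  -- the main real inequality
  have h1 : Real.exp (-(ENNReal.ofReal I).toReal) ≤ Real.exp (-I) := by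
    apply Real.exp_le_exp.mpr
    apply neg_le_neg
    rcases le_or_gt 0 I with hI0 | hI0
    · rw [ENNReal.toReal_ofReal hI0]
    · rw [ENNReal.ofReal_of_nonpos hI0.le]
      simpa using hI0.le
  have h2 : Real.exp (-I) ≤ S.toReal ^ 2 := by
    have hj : Real.exp (-I / 2) ≤ S.toReal := by
      rw [← h_real_lint, ← h_int_eq, ← h_avg]; exact h_jensen
    have he : Real.exp (-I) = Real.exp (-I / 2) ^ 2 := by
      rw [← Real.exp_nat_mul]; ring_nf
    rw [he]
    have := Real.exp_pos (-I / 2)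
    nlinarith
  have h_main : expNeg (klDiv' P Q) ≤ (P F + Q Fᶜ) * 2 := by
    rw [hkl, expNeg, if_neg ENNReal.ofReal_ne_top]
    calc ENNReal.ofReal (Real.exp (-(ENNReal.ofReal I).toReal))
        ≤ ENNReal.ofReal (S.toReal ^ 2) := ENNReal.ofReal_le_ofReal (h1.trans h2)
      _ = ENNReal.ofReal S.toReal ^ 2 := ENNReal.ofReal_pow ENNReal.toReal_nonneg 2
      _ ≤ S ^ 2 := by gcongr; exact ENNReal.ofReal_toReal_le
      _ ≤ (P F + Q Fᶜ) * 2 := hS2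
  calc (1 / 2 : ℝ≥0∞) * expNeg (klDiv' P Q) ≤ (1 / 2 : ℝ≥0∞) * ((P F + Q Fᶜ) * 2) := by
        gcongr
    _ = P F + Q Fᶜ := by
        rw [one_div, mul_comm, mul_assoc, ENNReal.mul_inv_cancel two_ne_zero ENNReal.ofNat_ne_top,
          mul_one]
end
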